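/- The group generated by the 6×6 matrix S₁ (rows (1,0,0,0,0,0), (0,-1,0,0,1,0), (0,0,-1,0,1,0), (0,-1,-1,0,1,1), (0,0,0,0,1,0), (0,-1,-1,1,1,0)) and the permutation matrix S₂ swapping coordinates 5 and 6 satisfies S₁² = S₂² = I and (S₁S₂)⁴ = I, and is isomorphic to the dihedral group of order 8 (the Weyl group W(C₂)). -/

import Mathlib

/-!
Two involutions `s`, `t` whose product `a = s * t` has order `n > 2` satisfy the dihedral
relations `a ^ n = t ^ 2 = 1`, `a * t * a = t`, so `r i ↦ a ^ i`, `sr i ↦ t * a ^ i` is a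
homomorphism from `DihedralGroup n` onto the monoid they generate. It is injective because `a`
has order `n` and no power of `a` equals `t`: such a power would commute with `a`, forcing
`a ^ 2 = 1`. For `S₁`, `S₂` the relations and `(S₁ * S₂) ^ 2 ≠ 1` are finite computations.
-/

theorem pow_mul_mul_pow_eq_of_mul_mul_eq {M : Type*} [Monoid M] {a t : M} (hat : a * t * a = t)
    (k : ℕ) : a ^ k * t * a ^ k = t := by
  induction k with
  | zero => simp
  | succ k ih =>
    calc a ^ (k + 1) * t * a ^ (k + 1) = a ^ k * (a * t * a) * a ^ k := by
          nth_rw 2 [pow_succ']; rw [pow_succ]; simp only [mul_assoc]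
      _ = t := by rw [hat, ih]

theorem pow_ne_of_mul_mul_eq {M : Type*} [Monoid M] {a t : M} (ht : t ^ 2 = 1)
    (hat : a * t * a = t) (ha2 : a ^ 2 ≠ 1) (k : ℕ) : a ^ k ≠ t := by
  intro hk
  apply ha2
  calc a ^ 2 = t ^ 2 * a ^ 2 := by rw [ht, one_mul]
    _ = t * (a * t * a) := by
      rw [← hk]; simp only [← pow_succ, ← pow_succ', ← pow_add, ← pow_mul]; ring_nf
    _ = 1 := by rw [hat, ← sq, ht]

namespace DihedralGroup

section Lift

variable {M : Type*} [Monoid M] {n : ℕ} [NeZero n] {a t : M}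

theorem pow_val_add (ha : a ^ n = 1) (i j : ZMod n) : a ^ (i + j).val = a ^ i.val * a ^ j.val := by
  rw [ZMod.val_add, ← pow_eq_pow_mod _ ha, pow_add]

theorem pow_val_mul_pow_val_sub (ha : a ^ n = 1) (i j : ZMod n) :
    a ^ i.val * a ^ (j - i).val = a ^ j.val := by
  rw [← pow_val_add ha, add_sub_cancel]

def lift (ha : a ^ n = 1) (ht : t ^ 2 = 1) (hat : a * t * a = t) : DihedralGroup n →* M where
  toFun
    | r i => a ^ i.val
    | sr i => t * a ^ i.val
  map_one' := by simp [← r_zero]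
  map_mul' := by
    have htt : t * t = 1 := by rw [← sq, ht]
    rintro (i | i) (j | j) <;>
      simp only [r_mul_r, r_mul_sr, sr_mul_r, sr_mul_sr]
    · exact pow_val_add ha i j
    · rw [← pow_val_mul_pow_val_sub ha i j]
      simp only [← mul_assoc, pow_mul_mul_pow_eq_of_mul_mul_eq hat]
    · rw [pow_val_add ha, mul_assoc]
    · have hrefl : t * a ^ i.val * t * a ^ i.val = 1 := by
        rw [mul_assoc t, mul_assoc t, pow_mul_mul_pow_eq_of_mul_mul_eq hat, htt]
      rw [← pow_val_mul_pow_val_sub ha i j]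
      simp only [← mul_assoc]
      rw [hrefl, one_mul]

variable (ha : a ^ n = 1) (ht : t ^ 2 = 1) (hat : a * t * a = t)

@[simp]
theorem lift_r (i : ZMod n) : lift ha ht hat (r i) = a ^ i.val := rfl

@[simp]
theorem lift_sr (i : ZMod n) : lift ha ht hat (sr i) = t * a ^ i.val := rfl

theorem lift_injective (hna : orderOf a = n) (ha2 : a ^ 2 ≠ 1) :
    Function.Injective (lift ha ht hat) := by
  refine (injective_iff_map_eq_one _).mpr ?_
  rintro (i | i) h
  · rw [lift_r] at h
    rw [← r_zero, r.injEq, ← ZMod.val_eq_zero]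
    by_contra hi
    exact (orderOf_le_of_pow_eq_one (Nat.pos_of_ne_zero hi) h).not_gt (hna ▸ i.val_lt)
  · refine absurd ?_ (pow_ne_of_mul_mul_eq ht hat ha2 i.val)
    calc a ^ i.val = t * (t * a ^ i.val) := by rw [← mul_assoc, ← sq, ht, one_mul]
      _ = t := by rw [← lift_sr ha ht hat, h, mul_one]

theorem mrange_lift : MonoidHom.mrange (lift ha ht hat) = Submonoid.closure {a * t, t} := by
  have ht_mem : t ∈ Submonoid.closure {a * t, t} := Submonoid.subset_closure (by simp)
  have ha_mem : a ∈ Submonoid.closure {a * t, t} := by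
    have hat_mem : a * t ∈ Submonoid.closure {a * t, t} := Submonoid.subset_closure (by simp)
    simpa only [mul_assoc, ← sq, ht, mul_one] using mul_mem hat_mem ht_mem
  apply le_antisymm
  · rintro _ ⟨i | i, rfl⟩
    · exact pow_mem ha_mem _
    · exact mul_mem ht_mem (pow_mem ha_mem _)
  · have ha_eq : lift ha ht hat (r 1) = a := by
      rw [lift_r, ZMod.val_one_eq_one_mod, ← pow_eq_pow_mod _ ha, pow_one]
    have ht_eq : lift ha ht hat (sr 0) = t := by simp
    rw [Submonoid.closure_le]
    rintro _ (rfl | rfl)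
    · exact ⟨r 1 * sr 0, by rw [map_mul, ha_eq, ht_eq]⟩
    · exact ⟨_, ht_eq⟩

end Lift

theorem nonempty_closure_mulEquiv_of_orderOf_mul {M : Type*} [Monoid M] {s t : M} {n : ℕ}
    (hs : s ^ 2 = 1) (ht : t ^ 2 = 1) (hn : 2 < n) (hst : orderOf (s * t) = n) :
    Nonempty (Submonoid.closure {s, t} ≃* DihedralGroup n) := by
  have : NeZero n := ⟨by omega⟩
  have hs_eq : s * t * t = s := by rw [mul_assoc, ← sq, ht, mul_one]
  have hat : s * t * t * (s * t) = t := by rw [hs_eq, ← mul_assoc, ← sq, hs, one_mul]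
  have ha2 : (s * t) ^ 2 ≠ 1 := pow_ne_one_of_lt_orderOf two_ne_zero (hst ▸ hn)
  set φ := lift (hst ▸ pow_orderOf_eq_one (s * t)) ht hat
  have hφ : MonoidHom.mrange φ = Submonoid.closure {s, t} := by rw [mrange_lift, hs_eq]
  exact ⟨((MulEquiv.ofBijective φ.mrangeRestrict
    ⟨fun x y h => lift_injective _ ht hat hst ha2 (congrArg Subtype.val h),
      φ.mrangeRestrict_surjective⟩).trans (MulEquiv.submonoidCongr hφ)).symm⟩

end DihedralGroup

/-- The invariance group of the triangular `Aₙ` `₄F₃` series, generated by `S₁`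
and `S₂`, satisfies `S₁² = S₂² = I`, `(S₁S₂)⁴ = I` with `(S₁S₂)` of exact
order 4, and is isomorphic to the dihedral group of order 8, i.e. `W(C₂)`. -/
theorem triangular_group_iso_dihedral :
    let S₁ : Matrix (Fin 6) (Fin 6) ℤ :=
      !![1,0,0,0,0,0; 0,-1,0,0,1,0; 0,0,-1,0,1,0; 0,-1,-1,0,1,1; 0,0,0,0,1,0; 0,-1,-1,1,1,0]
    let S₂ : Matrix (Fin 6) (Fin 6) ℤ :=
      !![1,0,0,0,0,0; 0,1,0,0,0,0; 0,0,1,0,0,0; 0,0,0,1,0,0; 0,0,0,0,0,1; 0,0,0,0,1,0]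
    S₁ ^ 2 = 1 ∧ S₂ ^ 2 = 1 ∧ (S₁ * S₂) ^ 4 = 1 ∧ (S₁ * S₂) ^ 2 ≠ 1 ∧
      Nonempty ((Submonoid.closure {S₁, S₂} : Submonoid (Matrix (Fin 6) (Fin 6) ℤ))
        ≃* DihedralGroup 4) := by
  intro S₁ S₂
  have hS₁ : S₁ ^ 2 = 1 := by decide
  have hS₂ : S₂ ^ 2 = 1 := by decide
  have h4 : (S₁ * S₂) ^ 4 = 1 := by decide
  have h2 : (S₁ * S₂) ^ 2 ≠ 1 := by decide
  have horder : orderOf (S₁ * S₂) = 4 := orderOf_eq_prime_pow (p := 2) (n := 1) h2 h4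
  exact ⟨hS₁, hS₂, h4, h2,
    DihedralGroup.nonempty_closure_mulEquiv_of_orderOf_mul hS₁ hS₂ (by norm_num) horder⟩
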